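/- Let G be a simple graph, v a vertex that has no incident edges in G, and r ≥ 1 an integer. Then the r-edge local girth of v satisfies g_v^{(r)}(G) = sup over all length-r valid sequences (s_1,…,s_r) for v of min_{1 ≤ i ≤ r} g_{{s_i,v}}(G_{i+1}), and this also equals the supremum over all such sequences of min_{1 ≤ i ≤ r} ( dist_{G_i}(s_i,v) + 1 ). -/

import Mathlib

open SimpleGraph

variable {V : Type*}

/-- `G + (c,v)`: the graph obtained from `G` by adding the edge `{c, v}`. -/
def addEdge (G : SimpleGraph V) (c v : V) : SimpleGraph V :=
  G ⊔ SimpleGraph.fromEdgeSet {s(c, v)}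

/-- The local girth of a vertex `v`: the infimum (in `ℕ∞`) of the lengths of
cycles of `G` passing through `v`. -/
noncomputable def localGirth (G : SimpleGraph V) (v : V) : ℕ∞ :=
  ⨅ (a : V) (w : G.Walk a a) (_ : w.IsCycle) (_ : v ∈ w.support), (w.length : ℕ∞)

/-- The edge local girth of `e`: the infimum (in `ℕ∞`) of the lengths of
cycles of `G` containing the edge `e`. -/
noncomputable def edgeLocalGirth (G : SimpleGraph V) (e : Sym2 V) : ℕ∞ :=
  ⨅ (a : V) (w : G.Walk a a) (_ : w.IsCycle) (_ : e ∈ w.edges), (w.length : ℕ∞)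

/-- A length-`r` valid sequence for `v` in `G`: pairwise distinct vertices,
each distinct from `v` and not adjacent to `v` in `G`. -/
def ValidSeq (G : SimpleGraph V) (v : V) {r : ℕ} (s : Fin r → V) : Prop :=
  Function.Injective s ∧ ∀ i, s i ≠ v ∧ ¬ G.Adj (s i) v

/-- The graph sequence of a sequence `s`: `graphSeq G v s 0 = G₁ = G` and
`graphSeq G v s i = G_{i+1} = G_i + (s_i, v)`. -/
def graphSeq (G : SimpleGraph V) (v : V) {r : ℕ} (s : Fin r → V) : ℕ → SimpleGraph V
  | 0 => G
  | i + 1 => if h : i < r then addEdge (graphSeq G v s i) (s ⟨i, h⟩) v else graphSeq G v s i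

/-- The `r`-edge local girth of `v` in `G`: the supremum, over all length-`r`
valid sequences `s` for `v`, of the local girth of `v` in the final graph. -/
noncomputable def multiEdgeLocalGirth (G : SimpleGraph V) (v : V) (r : ℕ) : ℕ∞ :=
  ⨆ (s : Fin r → V) (_ : ValidSeq G v s), localGirth (graphSeq G v s r) v

/-- The `r`-edge local girth of `c` with respect to `v`:
`g_v(G+(c,v))` if `r = 1`, and `g_v^{(r-1)}(G+(c,v))` if `r ≥ 2`. -/
noncomputable def cnMultiEdgeLocalGirth (G : SimpleGraph V) (c v : V) (r : ℕ) : ℕ∞ :=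
  if r = 1 then localGirth (addEdge G c v) v
  else multiEdgeLocalGirth (addEdge G c v) v (r - 1)

/-! Because `v` is isolated in `G`, its neighbours in `G_{i+1}` are exactly `s_1, …, s_i`, so a
cycle through `v` in `G_{r+1}` has the form `v s_i P s_j v` with `i ≠ j` and `P` a walk of `G`
avoiding `v`. For `j < i`, the walk `P` followed by the edge `s_j v` lies in `G_i`, so the cycle is
at least as long as `dist_{G_i}(s_i, v) + 1`. In any graph, adding a non-edge `uv` makes
`dist(u, v) + 1` the girth of the new edge, so this bound is `g_{s_i v}(G_{i+1})`; conversely each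
of these edge girths bounds `g_v(G_{r+1})` from above since the graphs `G_i` increase. -/

section Girth

variable {G : SimpleGraph V}

lemma localGirth_le_length {a v : V} {c : G.Walk a a} (hc : c.IsCycle) (hv : v ∈ c.support) :
    localGirth G v ≤ c.length :=
  iInf_le_of_le a <| iInf_le_of_le c <| iInf_le_of_le hc <| iInf_le _ hv

lemma le_localGirth {v : V} {n : ℕ∞}
    (h : ∀ (a : V) (c : G.Walk a a), c.IsCycle → v ∈ c.support → n ≤ c.length) :
    n ≤ localGirth G v :=
  le_iInf fun a => le_iInf fun c => le_iInf fun hc => le_iInf fun hv => h a c hc hv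

lemma edgeLocalGirth_le_length {a : V} {e : Sym2 V} {c : G.Walk a a} (hc : c.IsCycle)
    (he : e ∈ c.edges) : edgeLocalGirth G e ≤ c.length :=
  iInf_le_of_le a <| iInf_le_of_le c <| iInf_le_of_le hc <| iInf_le _ he

lemma le_edgeLocalGirth {e : Sym2 V} {n : ℕ∞}
    (h : ∀ (a : V) (c : G.Walk a a), c.IsCycle → e ∈ c.edges → n ≤ c.length) :
    n ≤ edgeLocalGirth G e :=
  le_iInf fun a => le_iInf fun c => le_iInf fun hc => le_iInf fun he => h a c hc he

end Girth

lemma SimpleGraph.Walk.exists_walk_length_eq_of_notMem_support {G H : SimpleGraph V} {v : V}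
    (hHG : ∀ {a b}, H.Adj a b → a ≠ v → b ≠ v → G.Adj a b) :
    ∀ {x y : V} (p : H.Walk x y), v ∉ p.support → ∃ q : G.Walk x y, q.length = p.length
  | _, _, .nil, _ => ⟨.nil, rfl⟩
  | _, _, .cons h p, hp => by
    rw [support_cons, List.mem_cons, not_or] at hp
    obtain ⟨q, hq⟩ := exists_walk_length_eq_of_notMem_support hHG p hp.2
    have hb : _ ≠ v := fun hb => hp.2 (hb ▸ p.start_mem_support)
    exact ⟨.cons (hHG h (Ne.symm hp.1) hb) q, by simp [hq]⟩

lemma SimpleGraph.Walk.IsCycle.exists_adj_adj_walk {G : SimpleGraph V} {a v : V}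
    {c : G.Walk a a} (hc : c.IsCycle) (hv : v ∈ c.support) :
    ∃ (x y : V) (t : G.Walk x y), G.Adj v x ∧ G.Adj v y ∧ x ≠ y ∧ v ∉ t.support ∧
      c.length = t.length + 2 ∧ ∀ e ∈ c.edges, v ∈ e → e = s(v, x) ∨ e = s(v, y) := by
  classical
  obtain ⟨y, hvy, q, hq⟩ := Walk.not_nil_iff.mp (hc.rotate hv).not_nil
  have hcq := hc.rotate hv
  rw [hq, Walk.cons_isCycle_iff] at hcq
  obtain ⟨x, hvx, t, ht⟩ := Walk.not_nil_iff.mp (Walk.not_nil_of_ne (p := q.reverse) hvy.ne)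
  have htp := hcq.1.reverse
  rw [ht, Walk.cons_isPath_iff] at htp
  have hlen : c.length = t.length + 2 := by
    rw [← Walk.length_rotate c v hv, hq, Walk.length_cons, ← Walk.length_reverse q, ht,
      Walk.length_cons]
  have hedges (e : Sym2 V) : e ∈ c.edges ↔ e = s(v, y) ∨ e = s(v, x) ∨ e ∈ t.edges := by
    rw [← (c.rotate_edges v hv).perm.mem_iff, hq, Walk.edges_cons, List.mem_cons,
      ← List.mem_reverse, ← Walk.edges_reverse, ht, Walk.edges_cons, List.mem_cons]
  refine ⟨x, y, t, hvx, hvy, ?_, htp.2, hlen, fun e he hve => ?_⟩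
  · rintro rfl
    have : t.length = 0 := Walk.length_eq_zero_iff.mpr (Walk.isPath_iff_nil.mp htp.1)
    have := hc.three_le_length
    omega
  · rcases (hedges e).mp he with rfl | rfl | het
    · exact Or.inr rfl
    · exact Or.inl rfl
    · exact absurd (Walk.mem_support_of_mem_edges het hve) htp.2

section addEdge

variable {G : SimpleGraph V} {u v : V}

lemma addEdge_adj {x y : V} :
    (addEdge G u v).Adj x y ↔ G.Adj x y ∨ s(x, y) = s(u, v) ∧ x ≠ y := by
  simp only [addEdge, sup_adj, fromEdgeSet_adj, Set.mem_singleton_iff]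

lemma le_addEdge : G ≤ addEdge G u v := le_sup_left

lemma adj_of_addEdge_adj {x y : V} (h : (addEdge G u v).Adj x y) (hx : x ≠ v) (hy : y ≠ v) :
    G.Adj x y := by
  rcases addEdge_adj.mp h with h | ⟨he, -⟩
  · exact h
  · rcases Sym2.eq_iff.mp he with ⟨-, rfl⟩ | ⟨rfl, -⟩ <;> contradiction

theorem edgeLocalGirth_addEdge (huv : u ≠ v) (h : ¬G.Adj u v) :
    edgeLocalGirth (addEdge G u v) s(u, v) = G.edist u v + 1 := by
  apply le_antisymm
  · rcases eq_or_ne (G.edist u v) ⊤ with htop | htop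
    · simp [htop]
    obtain ⟨p, hp, hlen⟩ := (reachable_of_edist_ne_top htop).exists_path_of_dist
    have hvu : (addEdge G u v).Adj v u := addEdge_adj.mpr (Or.inr ⟨Sym2.eq_swap, huv.symm⟩)
    have hc : (Walk.cons hvu (p.mapLe le_addEdge)).IsCycle := by
      rw [Walk.cons_isCycle_iff, Walk.edges_mapLe_eq_edges]
      exact ⟨hp.mapLe _, fun he => h (p.adj_of_mem_edges he).symm⟩
    calc edgeLocalGirth (addEdge G u v) s(u, v)
        ≤ (Walk.cons hvu (p.mapLe le_addEdge)).length :=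
          edgeLocalGirth_le_length hc (by simp [Sym2.eq_swap])
      _ = G.edist u v + 1 := by
          rw [Walk.length_cons, Walk.length_mapLe, hlen,
            (reachable_of_edist_ne_top htop).coe_dist_eq_edist.symm]
          push_cast
          rfl
  · refine le_edgeLocalGirth fun a c hc he => ?_
    have key : ∀ {y : V} (t : (addEdge G u v).Walk u y), (addEdge G u v).Adj v y → y ≠ u →
        v ∉ t.support → G.edist u v + 1 ≤ t.length + 2 := by
      intro y t hvy hyu hvt
      obtain ⟨q, hq⟩ := t.exists_walk_length_eq_of_notMem_support adj_of_addEdge_adj hvt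
      have hyv : G.Adj y v :=
        (addEdge_adj.mp hvy.symm).resolve_right fun ⟨he, _⟩ => hyu (Sym2.congr_left.mp he)
      calc G.edist u v + 1 ≤ ((q.concat hyv).length : ℕ∞) + 1 := by gcongr; exact edist_le _
        _ = t.length + 2 := by rw [Walk.length_concat, hq]; push_cast; ring
    obtain ⟨x, y, t, hx, hy, hxy, hvt, hlen, hedges⟩ :=
      hc.exists_adj_adj_walk (c.snd_mem_support_of_mem_edges he)
    rw [hlen]
    push_cast
    rcases hedges _ he (Sym2.mem_mk_right u v) with h' | h'
    · obtain rfl : u = x := by simpa [huv] using h'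
      exact key t hy (Ne.symm hxy) hvt
    · obtain rfl : u = y := by simpa [huv] using h'
      rw [← Walk.length_reverse]
      exact key t.reverse hx hxy (by simpa using hvt)

end addEdge

section graphSeq

variable {G : SimpleGraph V} {v : V} {r : ℕ} {s : Fin r → V}

lemma graphSeq_succ (i : Fin r) :
    graphSeq G v s (i + 1) = addEdge (graphSeq G v s i) (s i) v := by
  simp [graphSeq, i.isLt]

lemma graphSeq_mono : Monotone (graphSeq G v s) := by
  refine monotone_nat_of_le_succ fun n => ?_
  rw [graphSeq]
  split
  · exact le_addEdge
  · exact le_rfl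

lemma le_graphSeq (n : ℕ) : G ≤ graphSeq G v s n :=
  graphSeq_mono n.zero_le

lemma adj_of_graphSeq_adj {n : ℕ} {x y : V} (h : (graphSeq G v s n).Adj x y) (hx : x ≠ v)
    (hy : y ≠ v) : G.Adj x y := by
  induction n with
  | zero => exact h
  | succ n ih =>
    rw [graphSeq] at h
    split at h
    · exact ih (adj_of_addEdge_adj h hx hy)
    · exact ih h

lemma graphSeq_adj {i : Fin r} {n : ℕ} (hin : i.1 < n) (hsv : s i ≠ v) :
    (graphSeq G v s n).Adj (s i) v :=
  graphSeq_mono hin <| by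
    rw [graphSeq_succ]
    exact addEdge_adj.mpr (Or.inr ⟨rfl, hsv⟩)

lemma exists_eq_of_graphSeq_adj (hv : ∀ w : V, ¬ G.Adj v w) {n : ℕ} {x : V}
    (h : (graphSeq G v s n).Adj v x) : ∃ j : Fin r, j.1 < n ∧ s j = x := by
  induction n with
  | zero => exact absurd h (hv x)
  | succ n ih =>
    rw [graphSeq] at h
    split at h
    · rename_i hn
      rcases addEdge_adj.mp h with h | ⟨he, hvx⟩
      · obtain ⟨j, hj, rfl⟩ := ih h
        exact ⟨j, by omega, rfl⟩
      · rcases Sym2.eq_iff.mp he with ⟨-, rfl⟩ | ⟨-, rfl⟩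
        · exact absurd rfl hvx
        · exact ⟨⟨n, hn⟩, by simp, rfl⟩
    · obtain ⟨j, hj, rfl⟩ := ih h
      exact ⟨j, by omega, rfl⟩

lemma edgeLocalGirth_graphSeq (hv : ∀ w : V, ¬ G.Adj v w) (hs : ValidSeq G v s) (i : Fin r) :
    edgeLocalGirth (graphSeq G v s (i + 1)) s(s i, v) = (graphSeq G v s i).edist (s i) v + 1 := by
  rw [graphSeq_succ]
  refine edgeLocalGirth_addEdge (hs.2 i).1 fun h => ?_
  obtain ⟨j, hj, hji⟩ := exists_eq_of_graphSeq_adj hv h.symm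
  exact hj.ne (congrArg Fin.val (hs.1 hji))

lemma edist_graphSeq_le (hsv : ∀ i, s i ≠ v) {i j : Fin r} (hji : j < i)
    (t : G.Walk (s i) (s j)) : (graphSeq G v s i).edist (s i) v ≤ t.length + 1 := by
  have := edist_le ((t.mapLe (le_graphSeq i)).concat (graphSeq_adj hji (hsv j)))
  rwa [Walk.length_concat, Walk.length_mapLe, Nat.cast_succ] at this

theorem localGirth_graphSeq (hv : ∀ w : V, ¬ G.Adj v w) (hs : ValidSeq G v s) :
    localGirth (graphSeq G v s r) v =
      ⨅ i : Fin r, edgeLocalGirth (graphSeq G v s (i + 1)) s(s i, v) := by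
  apply le_antisymm
  · refine le_iInf fun i => le_edgeLocalGirth fun a c hc he => ?_
    rw [← Walk.length_mapLe (graphSeq_mono i.isLt) c]
    exact localGirth_le_length (hc.mapLe _)
      (by simpa using c.snd_mem_support_of_mem_edges he)
  refine le_localGirth fun a c hc hvc => ?_
  obtain ⟨x, y, t, hx, hy, hxy, hvt, hlen, -⟩ := hc.exists_adj_adj_walk hvc
  obtain ⟨i, -, rfl⟩ := exists_eq_of_graphSeq_adj hv hx
  obtain ⟨j, -, rfl⟩ := exists_eq_of_graphSeq_adj hv hy
  obtain ⟨q, hq⟩ := t.exists_walk_length_eq_of_notMem_support adj_of_graphSeq_adj hvt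
  have key : ∀ i j : Fin r, j < i → ∀ p : G.Walk (s i) (s j),
      ⨅ k : Fin r, edgeLocalGirth (graphSeq G v s (k + 1)) s(s k, v) ≤ p.length + 2 :=
    fun i j hji p => calc
      _ ≤ edgeLocalGirth (graphSeq G v s (i + 1)) s(s i, v) := iInf_le _ i
      _ = (graphSeq G v s i).edist (s i) v + 1 := edgeLocalGirth_graphSeq hv hs i
      _ ≤ ((p.length : ℕ∞) + 1) + 1 := by
          gcongr
          exact edist_graphSeq_le (fun k => (hs.2 k).1) hji p
      _ = p.length + 2 := by ring
  rw [hlen, ← hq]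
  push_cast
  rcases lt_or_gt_of_ne (fun hij : i = j => hxy (congrArg s hij)) with hij | hij
  · rw [← Walk.length_reverse]
    exact key j i hij q.reverse
  · exact key i j hij q

end graphSeq

theorem stmt_11_general (G : SimpleGraph V) (v : V) (hv : ∀ w : V, ¬ G.Adj v w)
    {r : ℕ} :
    multiEdgeLocalGirth G v r =
      (⨆ (s : Fin r → V) (_ : ValidSeq G v s),
        ⨅ i : Fin r, edgeLocalGirth (graphSeq G v s (i.1 + 1)) s(s i, v)) ∧
    multiEdgeLocalGirth G v r =
      ⨆ (s : Fin r → V) (_ : ValidSeq G v s),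
        ⨅ i : Fin r, ((graphSeq G v s i.1).edist (s i) v + 1) := by
  refine ⟨iSup_congr fun s => iSup_congr fun hs => localGirth_graphSeq hv hs,
    iSup_congr fun s => iSup_congr fun hs => ?_⟩
  rw [localGirth_graphSeq hv hs]
  exact iInf_congr (edgeLocalGirth_graphSeq hv hs)

/-- If `v` has no incident edges in `G` and `r ≥ 1`, then
`g_v^{(r)}(G) = sup_s min_{1 ≤ i ≤ r} g_{{s_i,v}}(G_{i+1})`, and this also equals
`sup_s min_{1 ≤ i ≤ r} (dist_{G_i}(s_i,v) + 1)`, suprema over all length-`r` valid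
sequences `s` for `v`. -/
theorem stmt_11 (G : SimpleGraph V) (v : V) (hv : ∀ w : V, ¬ G.Adj v w)
    {r : ℕ} (hr : 1 ≤ r) :
    multiEdgeLocalGirth G v r =
      (⨆ (s : Fin r → V) (_ : ValidSeq G v s),
        ⨅ i : Fin r, edgeLocalGirth (graphSeq G v s (i.1 + 1)) s(s i, v)) ∧
    multiEdgeLocalGirth G v r =
      ⨆ (s : Fin r → V) (_ : ValidSeq G v s),
        ⨅ i : Fin r, ((graphSeq G v s i.1).edist (s i) v + 1) :=
  stmt_11_general G v hv
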